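/- The component of log_l(exp_l(x)·exp_l(y)) of degree 1 in x and degree 2 in y equals −(1/12)[y,[x,y]] + (1/6)⟨y; y, x⟩ − (1/2)Φ(x; y, y), as an identity of primitive elements in k{{x,y}}; equivalently, expanded in the monomial basis, this component equals (1/2)x(yy) − (5/12)(xy)y + (1/12)(yx)y − (1/4)y(xy) − (1/6)(yy)x + (1/4)y(yx), where each monomial is parenthesized as written and y² = yy, so that xy² = x(yy) and y²x = (yy)x. -/

import Mathlib

/- STATEMENT 19: the component of log_l(exp_l(x)·exp_l(y)) of degree 1 in x and
degree 2 in y, expanded in the monomial basis, equals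
(1/2)·x(yy) − (5/12)·(xy)y + (1/12)·(yx)y − (1/4)·y(xy) − (1/6)·(yy)x + (1/4)·y(yx)
(equivalently, it is −(1/12)[y,[x,y]] + (1/6)⟨y; y, x⟩ − (1/2)Φ(x; y, y)).
Non-associative power series in x, y are modelled as pairs (constant term,
coefficient function on the free magma on two generators); log_l(1+u) = Σ_τ (B_τ/τ!)·τ(u). -/

noncomputable section

variable (K : Type*) [Field K] [CharZero K]

/-- Non-associative formal power series on two variables x, y: a constant term
together with a coefficient for every non-associative monomial. -/
abbrev NPS (K : Type*) := K × (FreeMagma (Fin 2) → K)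

def oneN : NPS K := (1, fun _ => 0)

/-- The product of non-associative power series. -/
def mulN (f g : NPS K) : NPS K :=
  (f.1 * g.1, fun w => f.1 * g.2 w + f.2 w * g.1 +
    match w with
    | .of _ => 0
    | .mul u v => f.2 u * g.2 v)

/-- Left-normed powers of a series: f⁰ = 1, f^{n+1} = fⁿ·f. -/
def powN (f : NPS K) : ℕ → NPS K
  | 0 => oneN K
  | n + 1 => mulN K (powN f n) f

/-- The variable x. -/
def XN : NPS K := (0, fun w => if w = .of 0 then 1 else 0)
/-- The variable y. -/
def YN : NPS K := (0, fun w => if w = .of 1 then 1 else 0)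

/-- Degree (number of letters) of a non-associative monomial. -/
def szX : FreeMagma (Fin 2) → ℕ
  | .of _ => 1
  | .mul l r => szX l + szX r

/-- exp_l(f) = Σ_{n≥0} fⁿ/n! with left-normed powers (exact for f with zero constant
term). -/
def expl (f : NPS K) : NPS K :=
  (1, fun w => ∑ n ∈ Finset.range (szX w + 1), (n.factorial : K)⁻¹ * (powN K f n).2 w)

/-- The number k of factors of a monomial τ = (…((x·τ₁)τ₂)…)τ_k. -/
def numFactors : FreeMagma Unit → ℕ
  | .of _ => 0
  | .mul l _ => numFactors l + 1

def Bfactors : FreeMagma Unit → ℚ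
  | .of _ => 1
  | .mul l r => Bfactors l * (bernoulli (numFactors r) * Bfactors r)

/-- B_τ = B_k·B_{τ₁}⋯B_{τ_k}. -/
def Bmon (t : FreeMagma Unit) : ℚ := bernoulli (numFactors t) * Bfactors t

def factFactors : FreeMagma Unit → ℚ
  | .of _ => 1
  | .mul l r => factFactors l * ((numFactors r).factorial * factFactors r)

/-- τ! = k!·τ₁!⋯τ_k!. -/
def factMon (t : FreeMagma Unit) : ℚ := (numFactors t).factorial * factFactors t

/-- All non-associative monomials in one variable of a given degree. -/
def treesOfSize : ℕ → List (FreeMagma Unit)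
  | 0 => []
  | 1 => [.of ()]
  | n + 2 => (List.range (n + 1)).attach.flatMap fun ⟨i, hi⟩ =>
      (treesOfSize (i + 1)).flatMap fun l =>
        (treesOfSize (n + 1 - i)).map fun r => FreeMagma.mul l r
decreasing_by all_goals (have := List.mem_range.mp hi; omega)

/-- Evaluation τ(u) of a one-variable monomial τ at a series u. -/
def evalT : FreeMagma Unit → NPS K → NPS K
  | .of _, u => u
  | .mul a b, u => mulN K (evalT a u) (evalT b u)

/-- log_l(f) = Σ_τ (B_τ/τ!)·τ(f − 1)  (exact when f has constant term 1). -/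
def logl (f : NPS K) : NPS K :=
  (0, fun w => ∑ n ∈ Finset.Icc 1 (szX w),
    ((treesOfSize n).map fun t =>
      ((Bmon t / factMon t : ℚ) : K) * (evalT K t (f - oneN K)).2 w).sum)

/-- x as a monomial. -/
def xm : FreeMagma (Fin 2) := .of 0
/-- y as a monomial. -/
def ym : FreeMagma (Fin 2) := .of 1

@[simp] theorem bch_fm_mul_ne_of {α} (a b : FreeMagma α) (x : α) : a * b ≠ .of x := nofun
@[simp] theorem bch_fm_of_ne_mul {α} (a b : FreeMagma α) (x : α) : FreeMagma.of x ≠ a * b := nofun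

theorem bch_t1 : treesOfSize 1 = [.of ()] := by rw [treesOfSize]
theorem bch_t2 : treesOfSize 2 = [.mul (.of ()) (.of ())] := by
  rw [treesOfSize, List.flatMap_def, List.map_attach_eq_pmap]
  simp [show List.range 1 = [0] from rfl, List.pmap, bch_t1]
theorem bch_t3 : treesOfSize 3 = [.mul (.of ()) (.mul (.of ()) (.of ())), .mul (.mul (.of ()) (.of ())) (.of ())] := by
  rw [treesOfSize, List.flatMap_def, List.map_attach_eq_pmap]
  simp [show List.range 2 = [0,1] from rfl, List.pmap, bch_t1, bch_t2]

theorem bch_of01 : (FreeMagma.of (0 : Fin 2)) ≠ FreeMagma.of 1 := by decide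
theorem bch_of10 : (FreeMagma.of (1 : Fin 2)) ≠ FreeMagma.of 0 := by decide

set_option maxHeartbeats 4000000 in
theorem bch_component_degree_one_two :
    (logl K (mulN K (expl K (XN K)) (expl K (YN K)))).2 (xm * (ym * ym)) = 1 / 2 ∧
    (logl K (mulN K (expl K (XN K)) (expl K (YN K)))).2 ((xm * ym) * ym) = -(5 / 12) ∧
    (logl K (mulN K (expl K (XN K)) (expl K (YN K)))).2 ((ym * xm) * ym) = 1 / 12 ∧
    (logl K (mulN K (expl K (XN K)) (expl K (YN K)))).2 (ym * (xm * ym)) = -(1 / 4) ∧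
    (logl K (mulN K (expl K (XN K)) (expl K (YN K)))).2 ((ym * ym) * xm) = -(1 / 6) ∧
    (logl K (mulN K (expl K (XN K)) (expl K (YN K)))).2 (ym * (ym * xm)) = 1 / 4 := by
  have hI : Finset.Icc 1 3 = ({1,2,3} : Finset ℕ) := rfl
  refine ⟨?_, ?_, ?_, ?_, ?_, ?_⟩ <;>
  · simp only [logl, xm, ym, szX, hI]
    norm_num [bch_t1, bch_t2, bch_t3, evalT, mulN, expl, powN, oneN, XN, YN, szX, Bmon,
      Bfactors, numFactors, factMon, factFactors, Finset.sum_range_succ, Prod.snd_sub,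
      Pi.sub_apply, Nat.factorial, Finset.sum_insert, Finset.mem_insert, bernoulli, bch_of01, bch_of10]

end
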